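/- arXiv:1203.4008 — 2 statements merged into one kernel-verified Lean document; each statement's English description precedes it below -/
import Mathlib

section
/- For every erasure probability ε with 0 < ε < 1, every integer N ≥ 1, and every integer t ≥ 1, the optimal block size is at most the greedy block size: K*_t ≤ K̂_t. -/
/-- Single-receiver decoding probability: probability that one receiver obtains
`K` successful receptions within `T` slots over a binary erasure channel with
erasure probability `ε`.  (The sum over `Finset.Icc K T` is empty, i.e. `0`,
when `T < K`.) -/
noncomputable def Phat (ε : ℝ) (K T : ℕ) : ℝ :=
  ∑ τ ∈ Finset.Icc K T, ((τ - 1).choose (K - 1) : ℝ) * ε ^ (τ - K) * (1 - ε) ^ K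

/-- Probability that all `N` receivers (over i.i.d. erasure channels) decode a
network-coded block of `K` packets within `T` slots. -/
noncomputable def Pall (ε : ℝ) (N K T : ℕ) : ℝ := (Phat ε K T) ^ N

/-- Expected immediate reward: expected number of packets decoded by all `N`
receivers when a block of size `K` is transmitted with `T` slots remaining. -/
noncomputable def Rew (ε : ℝ) (N T K : ℕ) : ℝ := (K : ℝ) * Pall ε N K T

/-- `Kh` is the greedy block size for horizon `T`: the least maximizer of the
expected immediate reward `K ↦ R_T(K)` over `K ∈ {1,…,T}`. -/
def IsGreedy (ε : ℝ) (N T Kh : ℕ) : Prop :=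
  Kh ∈ Finset.Icc 1 T ∧ (∀ K ∈ Finset.Icc 1 T, Rew ε N T K ≤ Rew ε N T Kh) ∧
  (∀ K ∈ Finset.Icc 1 T, (∀ K' ∈ Finset.Icc 1 T, Rew ε N T K' ≤ Rew ε N T K) → Kh ≤ K)

/-- Right-hand side of the Bellman recursion for the block-size-adaptation MDP:
`R_t(K) + ∑_{j=0}^{t-K} (P(K, t-j) - P(K, t-j-1)) · V(j)`. -/
noncomputable def bellmanRHS (ε : ℝ) (N : ℕ) (V : ℕ → ℝ) (t K : ℕ) : ℝ :=
  Rew ε N t K +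
    ∑ j ∈ Finset.range (t - K + 1), (Pall ε N K (t - j) - Pall ε N K (t - j - 1)) * V j

/-- `V` is the optimal value function of the finite-horizon MDP (Bellman recursion with
`V 0 = 0`, and `V t` the maximum of `bellmanRHS` over `K ∈ {1,…,t}`), and `Ks t` is the
least block size in `{1,…,t}` attaining that maximum. -/
def BellmanSystem (ε : ℝ) (N : ℕ) (V : ℕ → ℝ) (Ks : ℕ → ℕ) : Prop :=
  V 0 = 0 ∧
  (∀ t, 1 ≤ t → ∀ K ∈ Finset.Icc 1 t, bellmanRHS ε N V t K ≤ V t) ∧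
  (∀ t, 1 ≤ t → Ks t ∈ Finset.Icc 1 t ∧ V t = bellmanRHS ε N V t (Ks t) ∧
    ∀ K ∈ Finset.Icc 1 t, V t = bellmanRHS ε N V t K → Ks t ≤ K)

/-!
Expanding the Bellman right-hand side by summation by parts gives
`R_t(K) + ∑_{j < t-K} P(K, t-j-1) · (V(j+1) - V(j))`, because `V(0) = 0` and `P(K, K-1) = 0`.
By induction on `t` the value function is nondecreasing, so every increment `V(j+1) - V(j)` is
nonnegative. Since `P(K, T)` is nonincreasing in `K`, each weight and the number of terms of the
sum only shrink as `K` grows. Hence a block size `K > K̂_t` has reward at most `R_t(K̂_t)` and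
continuation value at most that of `K̂_t`, so `K̂_t` attains the maximum too and the least
maximizer `K*_t` cannot exceed it.
-/

open Finset

theorem Finset.sum_range_sub_mul_by_parts {R : Type*} [CommRing R] (a W : ℕ → R) (M : ℕ) :
    ∑ j ∈ range (M + 1), (a j - a (j + 1)) * W j =
      a 0 * W 0 - a (M + 1) * W M + ∑ j ∈ range M, a (j + 1) * (W (j + 1) - W j) := by
  induction M with
  | zero => simp [sub_mul]
  | succ M ih =>
    rw [sum_range_succ, ih, sum_range_succ]
    ring

theorem Finset.sum_range_mul_le_sum_range_mul {R : Type*} [Semiring R] [PartialOrder R]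
    [IsOrderedRing R] {w w' d : ℕ → R} {n n' : ℕ} (hn : n ≤ n')
    (hw : ∀ j < n, w j ≤ w' j) (hw' : ∀ j < n', 0 ≤ w' j) (hd : ∀ j < n', 0 ≤ d j) :
    ∑ j ∈ range n, w j * d j ≤ ∑ j ∈ range n', w' j * d j :=
  calc ∑ j ∈ range n, w j * d j
      ≤ ∑ j ∈ range n, w' j * d j := sum_le_sum fun j hj =>
        mul_le_mul_of_nonneg_right (hw j (mem_range.1 hj)) (hd j ((mem_range.1 hj).trans_le hn))
    _ ≤ ∑ j ∈ range n', w' j * d j := sum_le_sum_of_subset_of_nonneg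
        (range_subset_range.2 hn) fun j hj _ =>
          mul_nonneg (hw' j (mem_range.1 hj)) (hd j (mem_range.1 hj))

section Probabilities

variable {ε : ℝ}

theorem Phat_nonneg (h0 : 0 ≤ ε) (h1 : ε ≤ 1) (K T : ℕ) : 0 ≤ Phat ε K T := by
  have : 0 ≤ 1 - ε := by linarith
  exact sum_nonneg fun _ _ => by positivity

theorem Phat_monotone (h0 : 0 ≤ ε) (h1 : ε ≤ 1) (K : ℕ) : Monotone (Phat ε K) := by
  have : 0 ≤ 1 - ε := by linarith
  exact monotone_nat_of_le_succ fun T => sum_le_sum_of_subset_of_nonneg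
    (Icc_subset_Icc_right T.le_succ) fun _ _ _ => by positivity

theorem Phat_pred_self {K : ℕ} (hK : 1 ≤ K) : Phat ε K (K - 1) = 0 := by
  rw [Phat, Icc_eq_empty (by omega), sum_empty]

theorem Phat_succ_right (K T : ℕ) :
    Phat ε K (T + 1) = Phat ε K T + (T.choose (K - 1) : ℝ) * ε ^ (T + 1 - K) * (1 - ε) ^ K := by
  rcases le_or_gt K (T + 1) with h | h
  · rw [Phat, sum_Icc_succ_top h, Nat.add_sub_cancel, ← Phat]
  · simp [Phat, Icc_eq_empty_of_lt h, Icc_eq_empty_of_lt (T.lt_succ_self.trans h),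
      Nat.choose_eq_zero_of_lt (show T < K - 1 by omega)]

/-- `P̂(K, T)` is the probability of at least `K` successes in `T` trials, so it drops by the
binomial probability of exactly `K` successes when `K` is increased by one. -/
theorem Phat_eq_Phat_succ_add {K : ℕ} (hK : 1 ≤ K) (T : ℕ) :
    Phat ε K T = Phat ε (K + 1) T + (T.choose K : ℝ) * (1 - ε) ^ K * ε ^ (T - K) := by
  induction T with
  | zero => simp [Phat, Icc_eq_empty_of_lt (show 0 < K by omega), Nat.choose_eq_zero_of_lt hK]
  | succ T ih =>
    have hpow : (T.choose K : ℝ) * ε ^ (T + 1 - K) = T.choose K * ε ^ (T - K) * ε := by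
      rcases lt_or_ge T K with h | h
      · simp [Nat.choose_eq_zero_of_lt h]
      · rw [Nat.sub_add_comm h, pow_succ, mul_assoc]
    rw [Phat_succ_right, ih, Phat_succ_right, Nat.choose_succ_left T K (by omega),
      Nat.cast_add, Nat.add_sub_cancel, show T + 1 - (K + 1) = T - K by omega]
    linear_combination -(1 - ε) ^ K * hpow

theorem Phat_antitoneOn (h0 : 0 ≤ ε) (h1 : ε ≤ 1) (T : ℕ) :
    AntitoneOn (fun K => Phat ε K T) (Set.Ici 1) := by
  have : 0 ≤ 1 - ε := by linarith
  refine antitoneOn_nat_Ici_of_succ_le fun K hK => ?_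
  rw [Phat_eq_Phat_succ_add hK T, le_add_iff_nonneg_right]
  positivity

variable {N : ℕ}

theorem Pall_nonneg (h0 : 0 ≤ ε) (h1 : ε ≤ 1) (K T : ℕ) : 0 ≤ Pall ε N K T :=
  pow_nonneg (Phat_nonneg h0 h1 K T) N

theorem Pall_monotone (h0 : 0 ≤ ε) (h1 : ε ≤ 1) (K : ℕ) : Monotone (Pall ε N K) :=
  fun _ _ h => pow_le_pow_left₀ (Phat_nonneg h0 h1 _ _) (Phat_monotone h0 h1 K h) N

theorem Pall_antitoneOn (h0 : 0 ≤ ε) (h1 : ε ≤ 1) (T : ℕ) :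
    AntitoneOn (fun K => Pall ε N K T) (Set.Ici 1) :=
  fun _ ha _ hb h => pow_le_pow_left₀ (Phat_nonneg h0 h1 _ _) (Phat_antitoneOn h0 h1 T ha hb h) N

theorem Pall_pred_self (hN : 1 ≤ N) {K : ℕ} (hK : 1 ≤ K) : Pall ε N K (K - 1) = 0 := by
  rw [Pall, Phat_pred_self hK, zero_pow (by omega)]

theorem Rew_nonneg (h0 : 0 ≤ ε) (h1 : ε ≤ 1) (T K : ℕ) : 0 ≤ Rew ε N T K :=
  mul_nonneg K.cast_nonneg (Pall_nonneg h0 h1 K T)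

end Probabilities

section Bellman

variable {ε : ℝ} {N : ℕ} {V : ℕ → ℝ}

theorem bellmanRHS_eq_add_sum_mul_sub (hN : 1 ≤ N) (hV0 : V 0 = 0) {t K : ℕ} (hK : 1 ≤ K)
    (hKt : K ≤ t) : bellmanRHS ε N V t K =
      Rew ε N t K + ∑ j ∈ range (t - K), Pall ε N K (t - j - 1) * (V (j + 1) - V j) := by
  have hsum := sum_range_sub_mul_by_parts (fun j => Pall ε N K (t - j)) V (t - K)
  simp only [show t - (t - K + 1) = K - 1 by omega, Pall_pred_self hN hK, hV0, mul_zero,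
    zero_mul, sub_zero, zero_add] at hsum
  simp only [bellmanRHS, Nat.sub_sub, hsum]

theorem bellmanRHS_le_bellmanRHS_succ (h0 : 0 ≤ ε) (h1 : ε ≤ 1) (hN : 1 ≤ N) (hV0 : V 0 = 0)
    {t K : ℕ} (hK : 1 ≤ K) (hKt : K ≤ t) (hV : ∀ j < t, V j ≤ V (j + 1)) :
    bellmanRHS ε N V t K ≤ bellmanRHS ε N V (t + 1) K := by
  rw [bellmanRHS_eq_add_sum_mul_sub hN hV0 hK hKt,
    bellmanRHS_eq_add_sum_mul_sub hN hV0 hK (by omega)]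
  gcongr ?_ + ?_
  · exact mul_le_mul_of_nonneg_left (Pall_monotone h0 h1 K t.le_succ) K.cast_nonneg
  · exact sum_range_mul_le_sum_range_mul (by omega)
      (fun _ _ => Pall_monotone h0 h1 K (by omega)) (fun _ _ => Pall_nonneg h0 h1 _ _)
      fun j hj => sub_nonneg.2 (hV j (by omega))

theorem bellmanRHS_le_of_le (h0 : 0 ≤ ε) (h1 : ε ≤ 1) (hN : 1 ≤ N) (hV0 : V 0 = 0)
    {t K K' : ℕ} (hK : 1 ≤ K) (hKK' : K ≤ K') (hK't : K' ≤ t) (hV : ∀ j < t, V j ≤ V (j + 1))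
    (hR : Rew ε N t K' ≤ Rew ε N t K) :
    bellmanRHS ε N V t K' ≤ bellmanRHS ε N V t K := by
  rw [bellmanRHS_eq_add_sum_mul_sub hN hV0 (hK.trans hKK') hK't,
    bellmanRHS_eq_add_sum_mul_sub hN hV0 hK (hKK'.trans hK't)]
  exact add_le_add hR <| sum_range_mul_le_sum_range_mul (by omega)
    (fun _ _ => Pall_antitoneOn h0 h1 _ (Set.mem_Ici.2 hK) (Set.mem_Ici.2 (hK.trans hKK')) hKK')
    (fun _ _ => Pall_nonneg h0 h1 _ _) fun j hj => sub_nonneg.2 (hV j (by omega))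

theorem BellmanSystem.monotone {Ks : ℕ → ℕ} (h0 : 0 ≤ ε) (h1 : ε ≤ 1) (hN : 1 ≤ N)
    (hB : BellmanSystem ε N V Ks) : Monotone V := by
  obtain ⟨hV0, hle, hopt⟩ := hB
  refine monotone_nat_of_le_succ fun t => ?_
  induction t using Nat.strong_induction_on with
  | _ t ih =>
    rcases Nat.eq_zero_or_pos t with rfl | ht
    · calc V 0 = 0 := hV0
        _ ≤ Rew ε N 1 1 := Rew_nonneg h0 h1 1 1
        _ = bellmanRHS ε N V 1 1 := by simp [bellmanRHS_eq_add_sum_mul_sub hN hV0 le_rfl le_rfl]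
        _ ≤ V 1 := hle 1 le_rfl 1 (by simp)
    · obtain ⟨hKs, hVt, -⟩ := hopt t ht
      rw [mem_Icc] at hKs
      calc V t = bellmanRHS ε N V t (Ks t) := hVt
        _ ≤ bellmanRHS ε N V (t + 1) (Ks t) :=
          bellmanRHS_le_bellmanRHS_succ h0 h1 hN hV0 hKs.1 hKs.2 ih
        _ ≤ V (t + 1) := hle (t + 1) (by omega) (Ks t) (mem_Icc.2 ⟨hKs.1, by omega⟩)

end Bellman

/-- For `0 < ε < 1`, `N ≥ 1` and `t ≥ 1`, the optimal block size is at
most the greedy block size: `K*_t ≤ K̂_t`. -/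
theorem optimal_le_greedy (ε : ℝ) (hε0 : 0 < ε) (hε1 : ε < 1) (N : ℕ) (hN : 1 ≤ N)
    (V : ℕ → ℝ) (Ks : ℕ → ℕ) (hB : BellmanSystem ε N V Ks)
    (t : ℕ) (ht : 1 ≤ t) (Kh : ℕ) (hG : IsGreedy ε N t Kh) :
    Ks t ≤ Kh := by
  have hV := hB.monotone hε0.le hε1.le hN
  obtain ⟨hV0, hle, hopt⟩ := hB
  obtain ⟨hKs, hVt, hKs_least⟩ := hopt t ht
  obtain ⟨hKh, hKh_max, -⟩ := hG
  by_contra! hlt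
  have hKh_attains : V t = bellmanRHS ε N V t Kh := by
    refine le_antisymm ?_ (hle t ht Kh hKh)
    rw [hVt]
    exact bellmanRHS_le_of_le hε0.le hε1.le hN hV0 (mem_Icc.1 hKh).1 hlt.le (mem_Icc.1 hKs).2
      (fun j _ => hV j.le_succ) (hKh_max _ hKs)
  exact hlt.not_ge (hKs_least Kh hKh hKh_attains)
end

section
/- Suppose there is a single receiver, i.e., N = 1. Then for every erasure probability ε with 0 < ε < 1 and every integer t ≥ 1, the optimal block size is K*_t = 1; that is, plain retransmission is optimal in every slot. -/
open Finset

section BinomialSum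

variable {R : Type*} [CommRing R] (x y : R)

/-- For `x + y = 1` this is the expectation of `w S` for `S ∼ Bin(n, x)`. -/
def binomialSum (w : ℕ → R) (n : ℕ) : R :=
  ∑ i ∈ range (n + 1), (n.choose i : R) * (w i * x ^ i * y ^ (n - i))

theorem binomialSum_succ (w : ℕ → R) (n : ℕ) :
    binomialSum x y w (n + 1) =
      y * binomialSum x y w n + x * binomialSum x y (fun i => w (i + 1)) n := by
  rw [binomialSum, sum_choose_succ_mul (fun i j => w i * x ^ i * y ^ j), binomialSum,
    binomialSum, mul_sum, mul_sum]
  congr 1 <;> refine sum_congr rfl fun i hi => ?_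
  · rw [show n + 1 - i = n - i + 1 by have := mem_range.1 hi; omega]
    ring
  · ring

theorem binomialSum_add (w v : ℕ → R) (n : ℕ) :
    binomialSum x y (w + v) n = binomialSum x y w n + binomialSum x y v n := by
  simp only [binomialSum, ← sum_add_distrib, Pi.add_apply, add_mul, mul_add]

theorem binomialSum_const_mul (c : R) (w : ℕ → R) (n : ℕ) :
    binomialSum x y (fun i => c * w i) n = c * binomialSum x y w n := by
  rw [binomialSum, binomialSum, mul_sum]
  exact sum_congr rfl fun i _ => by ring

theorem binomialSum_single (k n : ℕ) :
    binomialSum x y (Pi.single k 1) n = n.choose k * x ^ k * y ^ (n - k) := by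
  rcases le_or_gt k n with hk | hk
  · simp [binomialSum, Pi.single_apply, hk, mul_assoc]
  · simp [binomialSum, Pi.single_apply, Nat.choose_eq_zero_of_lt hk, hk.not_ge]

theorem binomialSum_one (hxy : x + y = 1) (n : ℕ) : binomialSum x y 1 n = 1 := by
  have h := add_pow x y n
  rw [hxy, one_pow] at h
  rw [h, binomialSum]
  refine sum_congr rfl fun i _ => ?_
  simp only [Pi.one_apply]
  ring

theorem binomialSum_mono [PartialOrder R] [IsOrderedRing R] {x y : R} (hx : 0 ≤ x) (hy : 0 ≤ y)
    {w v : ℕ → R} (hwv : w ≤ v) (n : ℕ) : binomialSum x y w n ≤ binomialSum x y v n := by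
  unfold binomialSum
  gcongr with i
  exact hwv i

def binomialTail (k n : ℕ) : R :=
  binomialSum x y (fun i => if k ≤ i then 1 else 0) n

theorem binomialTail_zero_left (hxy : x + y = 1) (n : ℕ) : binomialTail x y 0 n = 1 := by
  simp only [binomialTail, zero_le, if_true]
  exact binomialSum_one x y hxy n

theorem binomialTail_succ_succ (hxy : x + y = 1) (k n : ℕ) :
    binomialTail x y (k + 1) (n + 1) =
      binomialTail x y (k + 1) n + n.choose k * x ^ (k + 1) * y ^ (n - k) := by
  have hshift :
      (fun i => if k + 1 ≤ i + 1 then (1 : R) else 0) = fun i => if k ≤ i then 1 else 0 := by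
    simp only [Nat.add_le_add_iff_right]
  have hsplit : (fun i => if k ≤ i then (1 : R) else 0) =
      (fun i => if k + 1 ≤ i then 1 else 0) + Pi.single k 1 := by
    ext i
    by_cases hki : i = k
    · simp [hki]
    · by_cases hik : k ≤ i <;> simp [hki, hik] <;> omega
  unfold binomialTail
  rw [binomialSum_succ, hshift, hsplit, binomialSum_add, binomialSum_single]
  linear_combination (binomialSum x y (fun i => if k + 1 ≤ i then 1 else 0) n) * hxy

/-- Each further trial raises `(S - k)⁺` by one exactly when it succeeds after `k` successes. -/
theorem mul_sum_binomialTail (hxy : x + y = 1) (k n : ℕ) :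
    x * ∑ m ∈ range n, binomialTail x y k m = binomialSum x y (fun i => ((i - k : ℕ) : R)) n := by
  induction n with
  | zero => simp [binomialSum]
  | succ n ih =>
    have hshift : (fun i => ((i + 1 - k : ℕ) : R)) =
        (fun i => ((i - k : ℕ) : R)) + fun i => if k ≤ i then 1 else 0 := by
      ext i
      by_cases hik : k ≤ i
      · simp [hik, Nat.sub_add_comm hik]
      · simp [hik, show i + 1 - k = 0 by omega, show i - k = 0 by omega]
    rw [sum_range_succ, mul_add, ih, binomialSum_succ, hshift, binomialSum_add, binomialTail]
    linear_combination (-binomialSum x y (fun i => ((i - k : ℕ) : R)) n) * hxy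

theorem binomialSum_id (hxy : x + y = 1) (n : ℕ) :
    binomialSum x y (fun i => (i : R)) n = n * x := by
  simpa [binomialTail_zero_left x y hxy, mul_comm] using (mul_sum_binomialTail x y hxy 0 n).symm

end BinomialSum

theorem Phat_eq_zero_of_lt (ε : ℝ) {K T : ℕ} (h : T < K) : Phat ε K T = 0 := by
  rw [Phat, Icc_eq_empty (by omega), sum_empty]

theorem Phat_succ_succ (ε : ℝ) (k T : ℕ) :
    Phat ε (k + 1) (T + 1) = Phat ε (k + 1) T + T.choose k * (1 - ε) ^ (k + 1) * ε ^ (T - k) := by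
  rcases le_or_gt k T with hk | hk
  · rw [Phat, sum_Icc_succ_top (by omega), ← Phat]
    simp only [Nat.add_sub_cancel, Nat.add_sub_add_right]
    ring
  · rw [Phat_eq_zero_of_lt ε (by omega), Phat_eq_zero_of_lt ε (by omega),
      Nat.choose_eq_zero_of_lt hk]
    simp

theorem Phat_eq_binomialTail (ε : ℝ) {K : ℕ} (hK : 1 ≤ K) (T : ℕ) :
    Phat ε K T = binomialTail (1 - ε) ε K T := by
  obtain ⟨k, rfl⟩ : ∃ k, K = k + 1 := ⟨K - 1, by omega⟩
  induction T with
  | zero => simp [Phat, binomialTail, binomialSum]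
  | succ T ih => rw [Phat_succ_succ, binomialTail_succ_succ _ _ (sub_add_cancel 1 ε), ih]

section SummationByParts

variable {R : Type*} [CommRing R]

theorem sum_range_sub_reflect (a : ℕ → R) (t : ℕ) :
    ∑ j ∈ range (t + 1), (a (t - j) - a (t - j - 1)) = a t - a 0 := by
  induction t with
  | zero => simp
  | succ t ih =>
    rw [sum_range_succ']
    simp only [Nat.add_sub_add_right, ih, Nat.sub_zero, Nat.add_sub_cancel]
    ring

theorem sum_range_sub_reflect_mul (a : ℕ → R) (t : ℕ) :
    ∑ j ∈ range (t + 1), (a (t - j) - a (t - j - 1)) * j = ∑ m ∈ range t, (a m - a 0) := by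
  induction t with
  | zero => simp
  | succ t ih =>
    rw [sum_range_succ']
    simp only [Nat.add_sub_add_right, Nat.cast_succ, mul_add, mul_one, sum_add_distrib, ih,
      sum_range_sub_reflect, Nat.cast_zero, mul_zero, add_zero]
    rw [sum_range_succ _ t]

end SummationByParts

section Bellman

variable {ε : ℝ} {V : ℕ → ℝ} {t K : ℕ}

theorem bellmanRHS_one_eq_sum_Phat (hK : 1 ≤ K) (hKt : K ≤ t) (hV : ∀ j < t, V j = (1 - ε) * j) :
    bellmanRHS ε 1 V t K = K * Phat ε K t + (1 - ε) * ∑ m ∈ range t, Phat ε K m := by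
  simp only [bellmanRHS, Rew, Pall, pow_one]
  congr 1
  have hextend : ∑ j ∈ range (t - K + 1), (Phat ε K (t - j) - Phat ε K (t - j - 1)) * V j =
      ∑ j ∈ range (t + 1), (Phat ε K (t - j) - Phat ε K (t - j - 1)) * ((1 - ε) * j) := by
    refine sum_subset_zero_on_sdiff (range_subset_range.2 (by omega)) (fun j hj => ?_)
      (fun j hj => by rw [hV j (by rw [mem_range] at hj; omega)])
    rw [mem_sdiff, mem_range, mem_range] at hj
    rw [Phat_eq_zero_of_lt ε (by omega), Phat_eq_zero_of_lt ε (by omega), sub_self, zero_mul]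
  rw [hextend, sum_congr rfl fun j _ => mul_left_comm _ (1 - ε) _, ← mul_sum,
    sum_range_sub_reflect_mul, Phat_eq_zero_of_lt ε (by omega : 0 < K)]
  simp only [sub_zero]

theorem bellmanRHS_one_eq_binomialSum (hK : 1 ≤ K) (hKt : K ≤ t)
    (hV : ∀ j < t, V j = (1 - ε) * j) :
    bellmanRHS ε 1 V t K = binomialSum (1 - ε) ε (fun i => if K ≤ i then (i : ℝ) else 0) t := by
  have hweight : (fun i => if K ≤ i then (i : ℝ) else 0) =
      (fun i => (K : ℝ) * if K ≤ i then 1 else 0) + fun i : ℕ => ((i - K : ℕ) : ℝ) := by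
    ext i
    by_cases hi : K ≤ i
    · simp [hi]
    · simp [hi, show i - K = 0 by omega]
  simp only [bellmanRHS_one_eq_sum_Phat hK hKt hV, Phat_eq_binomialTail ε hK]
  rw [mul_sum_binomialTail _ _ (sub_add_cancel 1 ε), hweight, binomialSum_add,
    binomialSum_const_mul, binomialTail]

theorem bellmanRHS_one_le (hε0 : 0 ≤ ε) (hε1 : ε ≤ 1) (hK : 1 ≤ K) (hKt : K ≤ t)
    (hV : ∀ j < t, V j = (1 - ε) * j) : bellmanRHS ε 1 V t K ≤ (1 - ε) * t := by
  rw [bellmanRHS_one_eq_binomialSum hK hKt hV, mul_comm, ← binomialSum_id _ _ (sub_add_cancel 1 ε)]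
  refine binomialSum_mono (by linarith) hε0 (fun i => ?_) t
  split_ifs <;> simp

theorem bellmanRHS_one_one (ht : 1 ≤ t) (hV : ∀ j < t, V j = (1 - ε) * j) :
    bellmanRHS ε 1 V t 1 = (1 - ε) * t := by
  rw [bellmanRHS_one_eq_binomialSum le_rfl ht hV, mul_comm,
    ← binomialSum_id _ _ (sub_add_cancel 1 ε)]
  congr 1
  ext i
  split_ifs with hi
  · rfl
  · simp [show i = 0 by omega]

end Bellman

theorem BellmanSystem.value_eq {ε : ℝ} (hε0 : 0 ≤ ε) (hε1 : ε ≤ 1) {V : ℕ → ℝ} {Ks : ℕ → ℕ}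
    (hB : BellmanSystem ε 1 V Ks) (t : ℕ) : V t = (1 - ε) * t := by
  induction t using Nat.strong_induction_on with
  | _ t ih =>
    rcases Nat.eq_zero_or_pos t with rfl | ht
    · simp [hB.1]
    obtain ⟨hmem, hVt, -⟩ := hB.2.2 t ht
    rw [mem_Icc] at hmem
    refine le_antisymm ?_ ?_
    · exact hVt ▸ bellmanRHS_one_le hε0 hε1 hmem.1 hmem.2 ih
    · exact bellmanRHS_one_one ht ih ▸ hB.2.1 t ht 1 (mem_Icc.2 ⟨le_rfl, ht⟩)

/-- With a single receiver (`N = 1`), for every `0 < ε < 1` and every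
`t ≥ 1`, the optimal block size is `K*_t = 1`: plain retransmission is optimal in every
slot. -/
theorem single_receiver_plain_optimal (ε : ℝ) (hε0 : 0 < ε) (hε1 : ε < 1)
    (V : ℕ → ℝ) (Ks : ℕ → ℕ) (hB : BellmanSystem ε 1 V Ks)
    (t : ℕ) (ht : 1 ≤ t) :
    Ks t = 1 := by
  obtain ⟨hmem, -, hleast⟩ := hB.2.2 t ht
  have hV : ∀ j, V j = (1 - ε) * j := hB.value_eq hε0.le hε1.le
  have hone : V t = bellmanRHS ε 1 V t 1 := by
    rw [bellmanRHS_one_one ht fun j _ => hV j, hV t]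
  exact le_antisymm (hleast 1 (mem_Icc.2 ⟨le_rfl, ht⟩) hone) (mem_Icc.1 hmem).1
end
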